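/- Let G be a finite group of rank n, p a prime with rk_p(G) = n, and G_p a Sylow p-subgroup of G. Suppose there exists a nontrivial subgroup H ⊆ Z(G_p) that is strongly closed in G_p with respect to G. Then the character φ = Ind^{G_p}_{K}(ρ_K − 1_K), where K = Ω₁(H) and ρ_K is the regular character of K, satisfies: (1) φ respects fusion in G (φ(h) = φ(k) whenever h, k ∈ G_p are conjugate in G), and (2) for every elementary abelian subgroup E ⊆ G_p of rank n, the inner product [φ|_E, 1_E] = 0. -/

import Mathlib

open scoped Classical

/-- A subgroup is elementary abelian for the prime `p` if it is commutative and
every element has order dividing `p`. -/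
def IsElementaryAbelian (p : ℕ) {G : Type*} [Group G] (H : Subgroup G) : Prop :=
  (∀ x ∈ H, ∀ y ∈ H, x * y = y * x) ∧ ∀ x ∈ H, x ^ p = 1

/-- `Ω₁(H)`: the subgroup generated by the elements of `H` of order dividing `p`. -/
def Omega1 (p : ℕ) {G : Type*} [Group G] (H : Subgroup G) : Subgroup G :=
  Subgroup.closure {x : G | x ∈ H ∧ x ^ p = 1}

/-- The `p`-rank of a group. -/
noncomputable def pRank (p : ℕ) (G : Type*) [Group G] : ℕ :=
  sSup {n | ∃ E : Subgroup G, IsElementaryAbelian p E ∧ Nat.card E = p ^ n}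

/-- The rank of a group: the maximum of the `p`-ranks over all primes `p`. -/
noncomputable def groupRank (G : Type*) [Group G] : ℕ :=
  sSup {n | ∃ p : ℕ, p.Prime ∧ n = pRank p G}

/-! Since `K = Ω₁(H)` is central in `G_p`, the induced character is `|G_p : K|` times `ρ_K − 1_K`
extended by zero, so it is determined by the two conditions `g ∈ K` and `g = 1`. Strong closure
of `H` makes both invariant under `G`-fusion. A central subgroup of exponent `p` can be adjoined
to any elementary abelian subgroup, so an elementary abelian `E` of maximal rank contains `K`,
and then `[ρ_K − 1_K, 1_K] = |K| − |K| = 0`. -/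

/-- The class function `ρ_K − 1_K` of `K`, extended by zero to the ambient group. -/
noncomputable def regularSubOne {P : Type*} [Group P] (K : Subgroup P) (y : P) : ℂ :=
  if y ∈ K then (if y = 1 then (Nat.card K : ℂ) else 0) - 1 else 0

section RegularSubOne

variable {P : Type*} [Group P] (K : Subgroup P)

theorem regularSubOne_congr {y z : P} (hmem : y ∈ K ↔ z ∈ K) (hone : y = 1 ↔ z = 1) :
    regularSubOne K y = regularSubOne K z := by
  simp only [regularSubOne, hmem, hone]

theorem regularSubOne_conj (hK : K.Normal) (x y : P) :
    regularSubOne K (x * y * x⁻¹) = regularSubOne K y :=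
  regularSubOne_congr K
    ⟨fun h => by simpa [mul_assoc] using hK.conj_mem' _ h x, fun h => hK.conj_mem y h x⟩
    conj_eq_one_iff

theorem sum_regularSubOne_conj [Fintype P] (hK : K.Normal) (g : P) :
    ∑ x : P, regularSubOne K (x * g * x⁻¹) = Fintype.card P * regularSubOne K g := by
  simp [regularSubOne_conj K hK]

theorem sum_regularSubOne_of_le {E : Subgroup P} [Fintype E] (hKE : K ≤ E) :
    ∑ e : E, regularSubOne K e = 0 := by
  have hsplit : ∀ e : E, regularSubOne K e =
      (if e = 1 then (Nat.card K : ℂ) else 0) - (if (e : P) ∈ K then 1 else 0) := by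
    intro e
    by_cases he : (e : P) ∈ K
    · simp [regularSubOne, he]
    · have hne : e ≠ 1 := fun h => he (h ▸ K.one_mem)
      simp [regularSubOne, he, hne]
  have hcount : (Finset.univ.filter fun e : E => (e : P) ∈ K).card = Nat.card K := by
    rw [← Fintype.card_subtype, ← Nat.card_eq_fintype_card,
      ← Nat.card_congr (Subgroup.subgroupOfEquivOfLe hKE).toEquiv]
    rfl
  simp [hsplit, Finset.sum_sub_distrib, Finset.sum_boole, hcount]

end RegularSubOne

section Central

variable {P : Type*} [Group P] {p : ℕ} {H : Subgroup P}

theorem mem_Omega1_iff_of_le_center (hHZ : H ≤ Subgroup.center P) {g : P} :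
    g ∈ Omega1 p H ↔ g ∈ H ∧ g ^ p = 1 := by
  refine ⟨fun hg => ?_, fun hg => Subgroup.subset_closure hg⟩
  induction hg using Subgroup.closure_induction with
  | mem x hx => exact hx
  | one => exact ⟨H.one_mem, one_pow p⟩
  | mul a b _ _ ha hb =>
    have hab : Commute a b := Subgroup.mem_center_iff.mp (hHZ ha.1) b |>.symm
    exact ⟨H.mul_mem ha.1 hb.1, by rw [hab.mul_pow, ha.2, hb.2, one_mul]⟩
  | inv a _ ha => exact ⟨H.inv_mem ha.1, by rw [inv_pow, ha.2, inv_one]⟩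

theorem Omega1_le_center (hHZ : H ≤ Subgroup.center P) : Omega1 p H ≤ Subgroup.center P :=
  fun _ hg => hHZ ((mem_Omega1_iff_of_le_center hHZ).mp hg).1

theorem normal_of_le_center {K : Subgroup P} (hKZ : K ≤ Subgroup.center P) : K.Normal :=
  ⟨fun k hk g => by
    rwa [Subgroup.mem_center_iff.mp (hKZ hk) g, mul_inv_cancel_right]⟩

theorem IsElementaryAbelian.sup_of_le_center {K E : Subgroup P} (hKZ : K ≤ Subgroup.center P)
    (hKp : ∀ k ∈ K, k ^ p = 1) (hE : IsElementaryAbelian p E) :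
    IsElementaryAbelian p (K ⊔ E) := by
  have := normal_of_le_center hKZ
  have central : ∀ k ∈ K, ∀ x : P, Commute k x := fun k hk x =>
    (Subgroup.mem_center_iff.mp (hKZ hk) x).symm
  constructor
  · intro a ha b hb
    obtain ⟨k₁, hk₁, e₁, he₁, rfl⟩ := Subgroup.mem_sup_of_normal_left.mp ha
    obtain ⟨k₂, hk₂, e₂, he₂, rfl⟩ := Subgroup.mem_sup_of_normal_left.mp hb
    exact ((central k₁ hk₁ _).mul_left
      ((central k₂ hk₂ e₁).symm.mul_right (hE.1 e₁ he₁ e₂ he₂))).eq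
  · intro a ha
    obtain ⟨k, hk, e, he, rfl⟩ := Subgroup.mem_sup_of_normal_left.mp ha
    rw [(central k hk e).mul_pow, hKp k hk, hE.2 e he, one_mul]

end Central

section Rank

variable {p : ℕ} {G : Type*} [Group G]

theorem IsElementaryAbelian.map {H : Type*} [Group H] {E : Subgroup G}
    (hE : IsElementaryAbelian p E) (f : G →* H) : IsElementaryAbelian p (E.map f) := by
  constructor
  · rintro _ ⟨a, ha, rfl⟩ _ ⟨b, hb, rfl⟩
    rw [← map_mul, ← map_mul, hE.1 a ha b hb]
  · rintro _ ⟨a, ha, rfl⟩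
    rw [← map_pow, hE.2 a ha, map_one]

theorem le_pRank [Finite G] (hp : p.Prime) {E : Subgroup G} (hE : IsElementaryAbelian p E)
    {m : ℕ} (hcard : Nat.card E = p ^ m) : m ≤ pRank p G := by
  refine le_csSup ⟨Nat.card G, ?_⟩ ⟨E, hE, hcard⟩
  rintro k ⟨E', -, hE'⟩
  exact (Nat.lt_pow_self hp.one_lt).le.trans (hE' ▸ Subgroup.card_le_card_group E')

theorem le_pRank_of_subgroup [Finite G] (hp : p.Prime) {S : Subgroup G} {E : Subgroup S}
    (hE : IsElementaryAbelian p E) {m : ℕ} (hcard : Nat.card E = p ^ m) : m ≤ pRank p G :=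
  le_pRank hp (hE.map S.subtype) <| by
    rw [← hcard, Nat.card_congr (E.equivMapOfInjective _ S.subtype_injective).toEquiv]

theorem IsElementaryAbelian.eq_of_le_of_card_eq [Finite G] [Fact p.Prime] {S : Subgroup G}
    {E E' : Subgroup S} (hE' : IsElementaryAbelian p E') (hEE' : E ≤ E')
    (hcard : Nat.card E = p ^ pRank p G) : E = E' := by
  have hpE' : IsPGroup p E' := fun a => ⟨1, by rw [pow_one]; exact Subtype.ext (hE'.2 a a.2)⟩
  obtain ⟨m, hm⟩ := IsPGroup.iff_card.mp hpE'
  refine Subgroup.eq_of_le_of_card_ge hEE' ?_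
  rw [hm, hcard]
  exact Nat.pow_le_pow_right (Fact.out : p.Prime).pos (le_pRank_of_subgroup Fact.out hE' hm)

end Rank

theorem mem_Omega1_of_conj {p : ℕ} {G : Type*} [Group G] {S : Subgroup G} {H : Subgroup S}
    (hHZ : H ≤ Subgroup.center S)
    (hsc : ∀ g : G, ∀ h : S, h ∈ H → g * ↑h * g⁻¹ ∈ S → ∃ h' : S, h' ∈ H ∧ (h' : G) = g * ↑h * g⁻¹)
    {g : G} {a b : S} (hab : g * ↑a * g⁻¹ = ↑b) (ha : a ∈ Omega1 p H) : b ∈ Omega1 p H := by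
  obtain ⟨haH, hap⟩ := (mem_Omega1_iff_of_le_center hHZ).mp ha
  obtain ⟨h', hh'H, hh'⟩ := hsc g a haH (hab ▸ b.2)
  obtain rfl : h' = b := Subtype.ext (hh'.trans hab)
  refine (mem_Omega1_iff_of_le_center hHZ).mpr ⟨hh'H, Subtype.ext ?_⟩
  rw [Subgroup.coe_pow, ← hab, ← MulAut.conj_apply, ← map_pow, MulAut.conj_apply,
    ← Subgroup.coe_pow, hap]
  simp

theorem stmt_7_general {p : ℕ} [Fact p.Prime] {G : Type} [Group G] [Fintype G]
    (n : ℕ) (hrkp : pRank p G = n)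
    (Gp : Sylow p G)
    (H : Subgroup Gp) (hHZ : H ≤ Subgroup.center Gp)
    -- `H` is strongly closed in `G_p` with respect to `G`
    (hsc : ∀ g : G, ∀ h : Gp, h ∈ H → g * ↑h * g⁻¹ ∈ (Gp : Subgroup G) →
      ∃ h' : Gp, h' ∈ H ∧ (h' : G) = g * ↑h * g⁻¹) :
    -- `K = Ω₁(H)` and `φ = Ind_K^{G_p}(ρ_K - 1_K)`, where `ρ_K - 1_K` is the class
    -- function on `G_p` supported on `K` with value `|K| - 1` at `1` and `-1` on
    -- nontrivial elements of `K`, and `Ind` is given by the induced-character formula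
    ∀ (K : Subgroup Gp), K = Omega1 p H →
    ∀ (φ : Gp → ℂ), (φ = fun g => (Nat.card K : ℂ)⁻¹ *
      ∑ x : Gp, (if x * g * x⁻¹ ∈ K then
        (if x * g * x⁻¹ = 1 then (Nat.card K : ℂ) else 0) - 1 else 0)) →
    -- (1) `φ` respects fusion in `G`
    ((∀ h k : Gp, (∃ g : G, g * ↑h * g⁻¹ = ↑k) → φ h = φ k) ∧
    -- (2) `[φ|_E, 1_E] = 0` for every rank-`n` elementary abelian `E ⊆ G_p`
    (∀ E : Subgroup Gp, IsElementaryAbelian p E → Nat.card E = p ^ n →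
      (Nat.card E : ℂ)⁻¹ * ∑ e : E, φ ↑e = 0)) := by
  rintro K rfl φ hφdef
  have hKZ := Omega1_le_center (p := p) hHZ
  have hφ : ∀ g : Gp, φ g =
      (Nat.card (Omega1 p H) : ℂ)⁻¹ * Fintype.card Gp * regularSubOne (Omega1 p H) g := by
    intro g
    rw [mul_assoc, ← sum_regularSubOne_conj _ (normal_of_le_center hKZ), hφdef]
    simp only [regularSubOne]
    -- the two sides differ only in their `Fintype`/`Decidable` instances
    congr!
  refine ⟨?_, ?_⟩
  · rintro h k ⟨g, hg⟩
    have hmem : h ∈ Omega1 p H ↔ k ∈ Omega1 p H :=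
      ⟨mem_Omega1_of_conj hHZ hsc hg,
        mem_Omega1_of_conj hHZ hsc (g := g⁻¹) (by rw [← hg]; group)⟩
    have hone : h = 1 ↔ k = 1 := by
      rw [← OneMemClass.coe_eq_one, ← OneMemClass.coe_eq_one (x := k), ← hg, conj_eq_one_iff]
    rw [hφ, hφ, regularSubOne_congr _ hmem hone]
  · intro E hE hcard
    have hKp : ∀ k ∈ Omega1 p H, k ^ p = 1 := fun k hk =>
      ((mem_Omega1_iff_of_le_center hHZ).mp hk).2
    have hEmax : E = Omega1 p H ⊔ E :=
      (hE.sup_of_le_center hKZ hKp).eq_of_le_of_card_eq le_sup_right (hrkp ▸ hcard)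
    have hKE : Omega1 p H ≤ E := hEmax ▸ le_sup_left
    simp only [hφ, ← Finset.mul_sum, sum_regularSubOne_of_le _ hKE, mul_zero]

theorem stmt_7 {p : ℕ} [Fact p.Prime] {G : Type} [Group G] [Fintype G]
    (n : ℕ) (hrkG : groupRank G = n) (hrkp : pRank p G = n)
    (hdvd : p ∣ Nat.card G) (Gp : Sylow p G)
    (H : Subgroup Gp) (hHZ : H ≤ Subgroup.center Gp) (hH : H ≠ ⊥)
    -- `H` is strongly closed in `G_p` with respect to `G`
    (hsc : ∀ g : G, ∀ h : Gp, h ∈ H → g * ↑h * g⁻¹ ∈ (Gp : Subgroup G) →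
      ∃ h' : Gp, h' ∈ H ∧ (h' : G) = g * ↑h * g⁻¹) :
    -- `K = Ω₁(H)` and `φ = Ind_K^{G_p}(ρ_K - 1_K)`, where `ρ_K - 1_K` is the class
    -- function on `G_p` supported on `K` with value `|K| - 1` at `1` and `-1` on
    -- nontrivial elements of `K`, and `Ind` is given by the induced-character formula
    ∀ (K : Subgroup Gp), K = Omega1 p H →
    ∀ (φ : Gp → ℂ), (φ = fun g => (Nat.card K : ℂ)⁻¹ *
      ∑ x : Gp, (if x * g * x⁻¹ ∈ K then
        (if x * g * x⁻¹ = 1 then (Nat.card K : ℂ) else 0) - 1 else 0)) →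
    -- (1) `φ` respects fusion in `G`
    ((∀ h k : Gp, (∃ g : G, g * ↑h * g⁻¹ = ↑k) → φ h = φ k) ∧
    -- (2) `[φ|_E, 1_E] = 0` for every rank-`n` elementary abelian `E ⊆ G_p`
    (∀ E : Subgroup Gp, IsElementaryAbelian p E → Nat.card E = p ^ n →
      (Nat.card E : ℂ)⁻¹ * ∑ e : E, φ ↑e = 0)) :=
  stmt_7_general n hrkp Gp H hHZ hsc
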